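/- arXiv:2505.19223 — 2 statements merged into one kernel-verified Lean document; each statement's English description precedes it below -/
import Mathlib

section
/- (Paley–Zygmund lower bound on mean absolute deviation) Let X be a random variable with mean μ, variance σ² > 0, and finite kurtosis κ = E[(X-μ)⁴]/σ⁴. Then E[|X - μ|] ≥ (√0.2 · 0.8² / κ) · σ. -/
open MeasureTheory ProbabilityTheory

theorem mean_abs_dev_lower_bound
    {Ω : Type*} [MeasureSpace Ω] [IsProbabilityMeasure (ℙ : Measure Ω)]
    (X : Ω → ℝ) (hX4 : MemLp X 4)
    (μ : ℝ) (hμ : μ = ∫ ω, X ω)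
    (hvar : 0 < variance X ℙ)
    (κ : ℝ) (hκ : κ = (∫ ω, (X ω - μ) ^ 4) / (variance X ℙ) ^ 2) :
    (Real.sqrt 0.2 * 0.8 ^ 2 / κ) * Real.sqrt (variance X ℙ)
      ≤ ∫ ω, |X ω - μ| := by
  have hZ4 : MemLp (fun ω => X ω - μ) 4 := hX4.sub (memLp_const μ)
  have hX2 : MemLp X 2 := hX4.mono_exponent (by norm_num)
  have hS : variance X ℙ = ∫ ω, (X ω - μ) ^ 2 := by
    rw [variance_eq_integral hX2.aestronglyMeasurable.aemeasurable]; simp [hμ]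
  -- Hölder with exponents 3/2 and 3
  have hf : MemLp (fun ω => |X ω - μ| ^ (2/3 : ℝ)) (ENNReal.ofReal (3/2)) := by
    have h := hZ4.norm_rpow_div (ENNReal.ofReal (2/3))
    rw [ENNReal.toReal_ofReal (by norm_num)] at h
    simp only [Real.norm_eq_abs] at h
    refine h.mono_exponent ?_
    rw [ENNReal.le_div_iff_mul_le (Or.inl (by simp)) (Or.inl (by simp)),
      ← ENNReal.ofReal_mul (by norm_num)]
    norm_num
  have hg : MemLp (fun ω => |X ω - μ| ^ (4/3 : ℝ)) (ENNReal.ofReal 3) := by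
    have h := hZ4.norm_rpow_div (ENNReal.ofReal (4/3))
    rw [ENNReal.toReal_ofReal (by norm_num)] at h
    simp only [Real.norm_eq_abs] at h
    refine h.mono_exponent ?_
    rw [ENNReal.le_div_iff_mul_le (Or.inl (by simp)) (Or.inl (by simp)),
      ← ENNReal.ofReal_mul (by norm_num)]
    norm_num
  have h1 := integral_mul_le_Lp_mul_Lq_of_nonneg (μ := ℙ)
    (Real.holderConjugate_iff (p := 3/2) (q := 3) |>.mpr ⟨by norm_num, by norm_num⟩)
    (Filter.Eventually.of_forall fun ω => Real.rpow_nonneg (abs_nonneg (X ω - μ)) _)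
    (Filter.Eventually.of_forall fun ω => Real.rpow_nonneg (abs_nonneg (X ω - μ)) _)
    hf hg
  have e1 : ∀ ω : Ω, |X ω - μ| ^ (2/3 : ℝ) * |X ω - μ| ^ (4/3 : ℝ) = (X ω - μ) ^ 2 := by
    intro ω
    rw [← Real.rpow_add' (abs_nonneg _) (by norm_num)]
    norm_num [Real.rpow_two, sq_abs]
  have e2 : ∀ ω : Ω, (|X ω - μ| ^ (2/3 : ℝ)) ^ (3/2 : ℝ) = |X ω - μ| := by
    intro ω
    rw [← Real.rpow_mul (abs_nonneg _)]
    norm_num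
  have e3 : ∀ ω : Ω, (|X ω - μ| ^ (4/3 : ℝ)) ^ (3 : ℝ) = (X ω - μ) ^ 4 := by
    intro ω
    rw [← Real.rpow_mul (abs_nonneg _), show ((4:ℝ)/3*3) = ((4:ℕ):ℝ) by norm_num,
      Real.rpow_natCast, ← abs_pow]
    exact abs_of_nonneg (by positivity)
  simp only [e1, e2, e3] at h1
  norm_num at h1
  -- h1 : ∫ (X-μ)^2 ≤ (∫ |X-μ|)^(2/3) * (∫ (X-μ)^4)^(1/3)
  -- Hölder with exponents 2 and 2 against the constant 1
  have hf2 : MemLp (fun ω => (X ω - μ) ^ 2) (ENNReal.ofReal 2) := by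
    have h := hZ4.norm_rpow_div 2
    rw [ENNReal.toReal_ofNat] at h
    simp only [Real.norm_eq_abs, Real.rpow_two, sq_abs] at h
    refine h.mono_exponent ?_
    rw [ENNReal.le_div_iff_mul_le (Or.inl (by simp)) (Or.inl (by simp))]
    calc ENNReal.ofReal 2 * 2 ≤ 2 * 2 := by
          gcongr; exact ENNReal.ofReal_le_of_le_toReal (by norm_num)
      _ = 4 := by norm_num
  have h2 := integral_mul_le_Lp_mul_Lq_of_nonneg (μ := ℙ)
    (Real.holderConjugate_iff (p := 2) (q := 2) |>.mpr ⟨by norm_num, by norm_num⟩)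
    (Filter.Eventually.of_forall fun ω => sq_nonneg (X ω - μ))
    (Filter.Eventually.of_forall fun _ => zero_le_one)
    hf2 (memLp_const 1)
  have e4 : ∀ ω : Ω, ((X ω - μ) ^ 2) ^ (2 : ℝ) = (X ω - μ) ^ 4 := by
    intro ω; rw [Real.rpow_two]; ring
  simp only [mul_one, e4, Real.one_rpow, integral_const, measure_univ,
    ENNReal.toReal_one, smul_eq_mul, one_mul] at h2
  norm_num at h2
  -- algebra
  set A := ∫ ω, |X ω - μ| with hA
  set S := variance X ℙ with hSdef
  set F := ∫ ω, (X ω - μ) ^ 4 with hF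
  rw [← hS] at h1 h2
  have hA0 : 0 ≤ A := integral_nonneg fun ω => abs_nonneg _
  have hF0 : 0 ≤ F := integral_nonneg fun ω => by positivity
  set s := Real.sqrt S with hs
  set t := A ^ ((1:ℝ)/3) with ht
  set u := F ^ ((1:ℝ)/6) with hu
  have hs0 : 0 < s := Real.sqrt_pos.mpr hvar
  have ht0 : 0 ≤ t := Real.rpow_nonneg hA0 _
  have hu0 : 0 ≤ u := Real.rpow_nonneg hF0 _
  have hsS : s ^ 2 = S := Real.sq_sqrt hvar.le
  have htA : t ^ 3 = A := by
    rw [ht, ← Real.rpow_natCast (A ^ ((1:ℝ)/3)) 3, ← Real.rpow_mul hA0]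
    norm_num
  have huF : u ^ 6 = F := by
    rw [hu, ← Real.rpow_natCast (F ^ ((1:ℝ)/6)) 6, ← Real.rpow_mul hF0]
    norm_num
  have h1' : s ^ 2 ≤ t ^ 2 * u ^ 2 := by
    rw [hsS]
    calc S ≤ A ^ ((2:ℝ)/3) * F ^ ((1:ℝ)/3) := h1
      _ = t ^ 2 * u ^ 2 := by
          rw [ht, hu, ← Real.rpow_natCast (A ^ ((1:ℝ)/3)) 2, ← Real.rpow_mul hA0,
            ← Real.rpow_natCast (F ^ ((1:ℝ)/6)) 2, ← Real.rpow_mul hF0]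
          norm_num
  have h2' : s ^ 2 ≤ u ^ 3 := by
    rw [hsS]
    calc S ≤ F ^ ((1:ℝ)/2) := h2
      _ = u ^ 3 := by
          rw [hu, ← Real.rpow_natCast (F ^ ((1:ℝ)/6)) 3, ← Real.rpow_mul hF0]
          norm_num
  have hu1 : 0 < u := by
    rcases hu0.lt_or_eq with h | h
    · exact h
    · exfalso; nlinarith [sq_nonneg s]
  have hstu : s ≤ t * u := by
    have h := h1'
    rw [← mul_pow] at h
    exact (pow_le_pow_iff_left₀ hs0.le (mul_nonneg ht0 hu0) two_ne_zero).mp h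
  have hc0 : (0:ℝ) ≤ Real.sqrt 0.2 * 0.8 ^ 2 := by positivity
  have hc1 : Real.sqrt 0.2 * 0.8 ^ 2 ≤ 1 := by
    nlinarith [Real.sqrt_le_one.mpr (by norm_num : (0.2:ℝ) ≤ 1), Real.sqrt_nonneg (0.2:ℝ)]
  have hκval : κ = u ^ 6 / s ^ 4 := by
    rw [hκ, ← huF, ← hsS]; ring
  have key : Real.sqrt 0.2 * 0.8 ^ 2 * s ^ 5 ≤ t ^ 3 * u ^ 6 := by
    have hcube : s ^ 3 ≤ (t * u) ^ 3 := pow_le_pow_left₀ hs0.le hstu 3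
    calc Real.sqrt 0.2 * 0.8 ^ 2 * s ^ 5 ≤ 1 * s ^ 5 := by
          have : (0:ℝ) < s ^ 5 := by positivity
          nlinarith
      _ = s ^ 3 * s ^ 2 := by ring
      _ ≤ (t * u) ^ 3 * u ^ 3 :=
          mul_le_mul hcube h2' (by positivity) (by positivity)
      _ = t ^ 3 * u ^ 6 := by ring
  clear_value A S F s t u
  rw [hκval, ← htA]
  rw [div_div_eq_mul_div, div_mul_eq_mul_div, div_le_iff₀ (by positivity)]
  calc Real.sqrt 0.2 * 0.8 ^ 2 * s ^ 4 * s = Real.sqrt 0.2 * 0.8 ^ 2 * s ^ 5 := by ring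
    _ ≤ t ^ 3 * u ^ 6 := key
end

section
/- (Gradient bias bound) Let X_θ be a random variable depending smoothly on a parameter θ ∈ ℝ^d with E[X_θ] = μ_θ, and suppose ‖∇_θ X_θ‖₂ ≤ C almost surely. Let f(x) = log σ(x). Then E‖∇_θ f(X_θ) - ∇_θ f(μ_θ)‖₂ ≤ (C/4)√(Var X_θ) + √(tr Var(∇_θ X_θ)). -/
open MeasureTheory ProbabilityTheory

noncomputable def logSigmoid (x : ℝ) : ℝ := Real.log (1 / (1 + Real.exp (-x)))

lemma one_add_exp_pos (x : ℝ) : 0 < 1 + Real.exp x := by positivity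

lemma hasDerivAt_logSigmoid (x : ℝ) :
    HasDerivAt logSigmoid ((1 + Real.exp x)⁻¹) x := by
  have hu : HasDerivAt (fun y : ℝ => 1 + Real.exp (-y)) (-Real.exp (-x)) x := by
    simpa using ((hasDerivAt_neg x).exp.const_add 1)
  have hne : (1 + Real.exp (-x)) ≠ 0 := (one_add_exp_pos (-x)).ne'
  have h := (hu.log hne).neg
  have heq : logSigmoid = fun y : ℝ => -Real.log (1 + Real.exp (-y)) := by
    funext y; rw [logSigmoid, one_div, Real.log_inv]
  rw [heq]
  refine h.congr_deriv ?_
  rw [Real.exp_neg]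
  have he := Real.exp_pos x
  field_simp
  ring

lemma deriv_logSigmoid (x : ℝ) : deriv logSigmoid x = (1 + Real.exp x)⁻¹ :=
  (hasDerivAt_logSigmoid x).deriv

lemma abs_deriv_logSigmoid_le_one (x : ℝ) : |deriv logSigmoid x| ≤ 1 := by
  rw [deriv_logSigmoid, abs_of_pos (by positivity)]
  rw [inv_le_one_iff₀]
  right
  nlinarith [Real.exp_pos x]

lemma lipschitz_deriv_logSigmoid (a b : ℝ) :
    |deriv logSigmoid a - deriv logSigmoid b| ≤ (1/4) * |a - b| := by
  rw [deriv_logSigmoid, deriv_logSigmoid]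
  have hg : ∀ x : ℝ, HasDerivAt (fun y : ℝ => (1 + Real.exp y)⁻¹)
      (-(Real.exp x) / (1 + Real.exp x) ^ 2) x := fun x =>
    ((Real.hasDerivAt_exp x).const_add 1).inv (one_add_exp_pos x).ne'
  have := Convex.norm_image_sub_le_of_norm_deriv_le
    (f := fun y : ℝ => (1 + Real.exp y)⁻¹) (s := Set.univ) (C := 1/4)
    (fun x _ => (hg x).differentiableAt)
    (fun x _ => by
      rw [(hg x).deriv]
      have he := Real.exp_pos x
      rw [Real.norm_eq_abs, abs_div, abs_neg, abs_of_pos he, abs_of_pos (by positivity)]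
      rw [div_le_iff₀ (by positivity)]
      nlinarith [sq_nonneg (1 - Real.exp x)])
    convex_univ (Set.mem_univ b) (Set.mem_univ a)
  simpa [Real.norm_eq_abs] using this

lemma int_le_sqrt_int_sq {Ω : Type*} [MeasureSpace Ω] [IsProbabilityMeasure (ℙ : Measure Ω)]
    {Y : Ω → ℝ} (hY : MemLp Y 2) (hnn : ∀ ω, 0 ≤ Y ω) :
    ∫ ω, Y ω ≤ Real.sqrt (∫ ω, (Y ω) ^ 2) := by
  have hv := variance_nonneg Y ℙ
  rw [variance_eq_sub hY] at hv
  simp only [Pi.pow_apply] at hv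
  rw [Real.le_sqrt (integral_nonneg hnn)]
  · linarith
  · exact integral_nonneg fun ω => sq_nonneg _

theorem gradient_bias_bound
    {Ω : Type*} [MeasureSpace Ω] [IsProbabilityMeasure (ℙ : Measure Ω)]
    {d : ℕ}
    (X : Ω → ℝ) (hX : MemLp X 2)
    -- G ω = ∇_θ X_θ (ω), the gradient of X_θ as a random vector
    (G : Ω → EuclideanSpace ℝ (Fin d)) (hG : MemLp G 2)
    (C : ℝ) (hC : ∀ᵐ ω, ‖G ω‖ ≤ C) :
    ∫ ω, ‖deriv logSigmoid (X ω) • G ω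
            - deriv logSigmoid (∫ ω, X ω) • (∫ ω, G ω)‖
      ≤ (C / 4) * Real.sqrt (variance X ℙ)
        + Real.sqrt (∫ ω, ‖G ω - ∫ ω, G ω‖ ^ 2) := by
  set μ : ℝ := ∫ ω, X ω with hμ
  set g0 : EuclideanSpace ℝ (Fin d) := ∫ ω, G ω with hg0def
  have hCnn : 0 ≤ C := by
    obtain ⟨ω, hω⟩ := hC.exists
    exact le_trans (norm_nonneg _) hω
  have hGint : Integrable G := hG.integrable one_le_two
  have hg0 : ‖g0‖ ≤ C := by
    calc ‖g0‖ ≤ ∫ ω, ‖G ω‖ := norm_integral_le_integral_norm _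
    _ ≤ ∫ _ω : Ω, C := integral_mono_ae hGint.norm (integrable_const C) hC
    _ = C := by simp
  -- pointwise bound
  have h_pt : ∀ ω, ‖deriv logSigmoid (X ω) • G ω - deriv logSigmoid μ • g0‖
      ≤ ‖G ω - g0‖ + (C / 4) * |X ω - μ| := by
    intro ω
    have hsplit : deriv logSigmoid (X ω) • G ω - deriv logSigmoid μ • g0
        = deriv logSigmoid (X ω) • (G ω - g0)
          + (deriv logSigmoid (X ω) - deriv logSigmoid μ) • g0 := by
      rw [smul_sub, sub_smul]; abel
    rw [hsplit]
    refine le_trans (norm_add_le _ _) (add_le_add ?_ ?_)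
    · rw [norm_smul, Real.norm_eq_abs]
      calc |deriv logSigmoid (X ω)| * ‖G ω - g0‖
          ≤ 1 * ‖G ω - g0‖ :=
            mul_le_mul_of_nonneg_right (abs_deriv_logSigmoid_le_one _) (norm_nonneg _)
      _ = ‖G ω - g0‖ := one_mul _
    · rw [norm_smul, Real.norm_eq_abs]
      calc |deriv logSigmoid (X ω) - deriv logSigmoid μ| * ‖g0‖
          ≤ ((1/4) * |X ω - μ|) * C := by
            apply mul_le_mul (lipschitz_deriv_logSigmoid _ _) hg0 (norm_nonneg _)
            positivity
      _ = (C / 4) * |X ω - μ| := by ring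
  have hGsub : MemLp (fun ω => G ω - g0) 2 := hG.sub (memLp_const g0)
  have h1 : Integrable (fun ω => ‖G ω - g0‖) := (hGsub.integrable one_le_two).norm
  have hXsub : MemLp (fun ω => X ω - μ) 2 := hX.sub (memLp_const μ)
  have h2 : Integrable (fun ω => |X ω - μ|) :=
    ((hX.integrable one_le_two).sub (integrable_const μ)).abs
  calc ∫ ω, ‖deriv logSigmoid (X ω) • G ω - deriv logSigmoid μ • g0‖
      ≤ ∫ ω, (‖G ω - g0‖ + (C / 4) * |X ω - μ|) :=
        integral_mono_of_nonneg (ae_of_all _ fun ω => norm_nonneg _)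
          (h1.add (h2.const_mul _)) (ae_of_all _ h_pt)
    _ = (∫ ω, ‖G ω - g0‖) + (C / 4) * ∫ ω, |X ω - μ| := by
        rw [integral_add h1 (h2.const_mul _), MeasureTheory.integral_const_mul]
    _ ≤ Real.sqrt (∫ ω, ‖G ω - g0‖ ^ 2) + (C / 4) * Real.sqrt (variance X ℙ) := by
        refine add_le_add ?_ ?_
        · exact int_le_sqrt_int_sq hGsub.norm fun ω => norm_nonneg _
        · refine mul_le_mul_of_nonneg_left ?_ (by positivity)
          have h := int_le_sqrt_int_sq (Y := fun ω => |X ω - μ|)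
            (by simpa [← Real.norm_eq_abs] using hXsub.norm) (fun ω => abs_nonneg _)
          refine le_trans h ?_
          apply le_of_eq
          congr 1
          rw [variance_eq_integral hX.aestronglyMeasurable.aemeasurable]
          simp [sq_abs, hμ]
    _ = (C / 4) * Real.sqrt (variance X ℙ) + Real.sqrt (∫ ω, ‖G ω - g0‖ ^ 2) := by ring
end
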